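/- For any I_ABC index coding problem (with parameters r, T, involution σ, partition of blocks into Type_A, Type_B, Type_C), the r×rT matrix G_ABC is a scalar linear index code for it: for every receiver t demanding message (k, i), there exist a row vector u ∈ 𝔽^r and a row vector v ∈ 𝔽^{rT} supported on S(t) such that u·G_ABC + v equals the standard basis row vector indexed by (k, i). -/
import Mathlib


open Matrix

/-- The three classes of message blocks in an `I_ABC` index coding problem. -/
inductive BlockType | A | B | C
deriving DecidableEq

/-- For any `I_ABC` index coding problem, the matrix `G_ABC` (with column blocks
`I` for `Type_A`, `C` for `Type_B` and `I + C - C₁` for `Type_C`) is a scalar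
linear index code: every receiver can recover its demanded message. -/
theorem GABC_is_index_code {r T L : ℕ} {𝔽 : Type*} [Field 𝔽]
    (σ : Equiv.Perm (Fin r)) (hσ : ∀ i, σ (σ i) = i)
    (C C1 : Matrix (Fin r) (Fin r) 𝔽)
    (hC : ∀ i j, C i j = if i = σ j then 1 else 0)
    (hC1 : ∀ i j, C1 i j = if i = j ∧ σ i = i then 1 else 0)
    (ty : Fin T → BlockType)
    (dem : Fin L → Fin r × Fin T) (S : Fin L → Set (Fin r × Fin T))
    (hdem : ∀ t, dem t ∉ S t)
    (hA : ∀ t, ty (dem t).2 = BlockType.A →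
      (∀ j, ty j = BlockType.A → j ≠ (dem t).2 → ((dem t).1, j) ∈ S t) ∧
      (∀ j, ty j = BlockType.B → (σ (dem t).1, j) ∈ S t) ∧
      (∀ j, ty j = BlockType.C → ((dem t).1, j) ∈ S t) ∧
      (σ (dem t).1 ≠ (dem t).1 →
        ∀ j, ty j = BlockType.C → (σ (dem t).1, j) ∈ S t))
    (hB : ∀ t, ty (dem t).2 = BlockType.B →
      (∀ j, ty j = BlockType.B → j ≠ (dem t).2 → ((dem t).1, j) ∈ S t) ∧
      (∀ j, ty j = BlockType.A → (σ (dem t).1, j) ∈ S t) ∧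
      (∀ j, ty j = BlockType.C → ((dem t).1, j) ∈ S t) ∧
      (σ (dem t).1 ≠ (dem t).1 →
        ∀ j, ty j = BlockType.C → (σ (dem t).1, j) ∈ S t))
    (hCty : ∀ t, ty (dem t).2 = BlockType.C →
      (∀ j, ty j = BlockType.C → j ≠ (dem t).2 → ((dem t).1, j) ∈ S t) ∧
      (σ (dem t).1 ≠ (dem t).1 →
        (∀ j, ty j = BlockType.C → (σ (dem t).1, j) ∈ S t) ∧
        (((∀ j, ty j = BlockType.A → ((dem t).1, j) ∈ S t) ∧
            (∀ j, ty j = BlockType.B → (σ (dem t).1, j) ∈ S t)) ∨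
          ((∀ j, ty j = BlockType.A → (σ (dem t).1, j) ∈ S t) ∧
            (∀ j, ty j = BlockType.B → ((dem t).1, j) ∈ S t)))) ∧
      (σ (dem t).1 = (dem t).1 →
        (∀ j, ty j = BlockType.A → ((dem t).1, j) ∈ S t) ∧
        (∀ j, ty j = BlockType.B → (σ (dem t).1, j) ∈ S t)))
    (GABC : Matrix (Fin r) (Fin r × Fin T) 𝔽)
    (hG : ∀ (s m : Fin r) (j : Fin T), GABC s (m, j) =
      match ty j with
      | BlockType.A => (1 : Matrix (Fin r) (Fin r) 𝔽) s m
      | BlockType.B => C s m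
      | BlockType.C => (1 + C - C1) s m) :
    ∀ t, ∃ (u : Fin r → 𝔽) (v : Fin r × Fin T → 𝔽),
      (∀ p, v p ≠ 0 → p ∈ S t) ∧
      u ᵥ* GABC + v = Pi.single (dem t) 1 := by
  intro t
  set k := (dem t).1 with hk
  set i := (dem t).2 with hi
  have hdemt : dem t = (k, i) := rfl
  -- entry values of GABC in terms of `ty`
  have hval : ∀ (s m : Fin r) (j : Fin T), GABC s (m, j) =
      match ty j with
      | BlockType.A => if s = m then 1 else 0
      | BlockType.B => if s = σ m then 1 else 0
      | BlockType.C => (if s = m then 1 else 0) + (if s = σ m then 1 else 0)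
          - (if s = m ∧ σ s = s then 1 else 0) := by
    intro s m j
    rw [hG]
    rcases ty j with _ | _ | _
    · simp [Matrix.one_apply]
    · simp [hC]
    · simp [Matrix.sub_apply, Matrix.add_apply, Matrix.one_apply, hC, hC1]
  suffices h : ∃ s : Fin r, GABC s (dem t) = 1 ∧
      (∀ p : Fin r × Fin T, p ≠ dem t → GABC s p ≠ 0 → p ∈ S t) by
    obtain ⟨s, hs1, hs⟩ := h
    refine ⟨Pi.single s 1, Pi.single (dem t) 1 - Pi.single s 1 ᵥ* GABC, ?_, by abel⟩
    have hrow : ∀ q, (Pi.single s (1:𝔽) ᵥ* GABC) q = GABC s q := by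
      intro q
      simp [Matrix.vecMul, dotProduct, Pi.single_apply]
    intro p hp
    by_cases hpd : p = dem t
    · exfalso; apply hp; subst hpd; simp [hrow, hs1]
    · refine hs p hpd fun h0 => hp ?_
      simp [hrow, h0, Pi.single_eq_of_ne hpd]
  -- nonzero analysis for type C blocks
  have hCnz : ∀ s m : Fin r,
      ((if s = m then (1:𝔽) else 0) + (if s = σ m then 1 else 0)
        - (if s = m ∧ σ s = s then 1 else 0)) ≠ 0 → s = m ∨ s = σ m := by
    intro s m h
    by_contra hcon
    push_neg at hcon
    simp [hcon.1, hcon.2] at h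
  rcases hty : ty i with _ | _ | _
  · -- demanded block is of type A
    obtain ⟨hA1, hA2, hA3, hA4⟩ := hA t hty
    refine ⟨k, ?_, ?_⟩
    · rw [hdemt, hval, hty]; simp
    · rintro ⟨m, j⟩ hne h0
      rw [hval] at h0
      rcases htj : ty j with _ | _ | _ <;> rw [htj] at h0
      · have hm : k = m := by by_contra hmk; simp [hmk] at h0
        subst hm
        exact hA1 j htj fun hj => hne (by rw [hj, hdemt])
      · have hm : k = σ m := by by_contra hmk; simp [hmk] at h0
        have : m = σ k := by rw [hm, hσ]
        subst this
        exact hA2 j htj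
      · rcases hCnz k m h0 with hm | hm
        · subst hm; exact hA3 j htj
        · have hm' : m = σ k := by rw [hm, hσ]
          subst hm'
          by_cases hfix : σ k = k
          · rw [hfix]; exact hA3 j htj
          · exact hA4 hfix j htj
  · -- demanded block is of type B
    obtain ⟨hB1, hB2, hB3, hB4⟩ := hB t hty
    refine ⟨σ k, ?_, ?_⟩
    · rw [hdemt, hval, hty]; simp
    · rintro ⟨m, j⟩ hne h0
      rw [hval] at h0
      rcases htj : ty j with _ | _ | _ <;> rw [htj] at h0
      · have hm : σ k = m := by by_contra hmk; simp [hmk] at h0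
        rw [← hm]; exact hB2 j htj
      · have hm : σ k = σ m := by by_contra hmk; simp [hmk] at h0
        have hm' : m = k := σ.injective hm.symm
        subst hm'
        exact hB1 j htj fun hj => hne (by rw [hj, hdemt])
      · rcases hCnz (σ k) m h0 with hm | hm
        · rw [← hm]
          by_cases hfix : σ k = k
          · rw [hfix]; exact hB3 j htj
          · exact hB4 hfix j htj
        · have hm' : m = k := (σ.injective hm).symm
          subst hm'
          exact hB3 j htj
  · -- demanded block is of type C
    obtain ⟨h1, h2, h3⟩ := hCty t hty
    by_cases hfix : σ k = k
    · obtain ⟨h3A, h3B⟩ := h3 hfix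
      refine ⟨k, ?_, ?_⟩
      · rw [hdemt, hval, hty]; simp [hfix]
      · rintro ⟨m, j⟩ hne h0
        rw [hval] at h0
        rcases htj : ty j with _ | _ | _ <;> rw [htj] at h0
        · have hm : k = m := by by_contra hmk; simp [hmk] at h0
          subst hm; exact h3A j htj
        · have hm : k = σ m := by by_contra hmk; simp [hmk] at h0
          have : m = σ k := by rw [hm, hσ]
          subst this
          exact h3B j htj
        · rcases hCnz k m h0 with hm | hm
          · subst hm
            exact h1 j htj fun hj => hne (by rw [hj, hdemt])
          · have hm' : m = σ k := by rw [hm, hσ]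
            subst hm'
            rw [hfix]
            exact h1 j htj fun hj => hne (by rw [hfix, hj, hdemt])
    · obtain ⟨hσC, hor⟩ := h2 hfix
      rcases hor with ⟨hAk, hBsk⟩ | ⟨hAsk, hBk⟩
      · refine ⟨k, ?_, ?_⟩
        · have hne' : k ≠ σ k := fun h => hfix h.symm
          rw [hdemt, hval, hty]
          simp [hfix, hne']
        · rintro ⟨m, j⟩ hne h0
          rw [hval] at h0
          rcases htj : ty j with _ | _ | _ <;> rw [htj] at h0
          · have hm : k = m := by by_contra hmk; simp [hmk] at h0
            subst hm; exact hAk j htj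
          · have hm : k = σ m := by by_contra hmk; simp [hmk] at h0
            have : m = σ k := by rw [hm, hσ]
            subst this; exact hBsk j htj
          · rcases hCnz k m h0 with hm | hm
            · subst hm
              exact h1 j htj fun hj => hne (by rw [hj, hdemt])
            · have hm' : m = σ k := by rw [hm, hσ]
              subst hm'
              exact hσC j htj
      · refine ⟨σ k, ?_, ?_⟩
        · rw [hdemt, hval, hty]
          simp [hfix]
        · rintro ⟨m, j⟩ hne h0
          rw [hval] at h0
          rcases htj : ty j with _ | _ | _ <;> rw [htj] at h0
          · have hm : σ k = m := by by_contra hmk; simp [hmk] at h0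
            rw [← hm]; exact hAsk j htj
          · have hm : σ k = σ m := by by_contra hmk; simp [hmk] at h0
            have hm' : m = k := σ.injective hm.symm
            subst hm'; exact hBk j htj
          · rcases hCnz (σ k) m h0 with hm | hm
            · rw [← hm]; exact hσC j htj
            · have hm' : m = k := (σ.injective hm).symm
              subst hm'
              exact h1 j htj fun hj => hne (by rw [hj, hdemt])
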